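/- Let n ≥ 3, let B be the orthonormal basis of su(n) and H(X,Y) := i·tr(η(XY+YX)). Then the full contraction of H cubed satisfies Σ_{X,Y,Z ∈ B} H(X,Y)·H(Y,Z)·H(Z,X) = 2(n−1)(n−2)(12−n²). -/

import Mathlib

open Matrix

/-- The square complex matrices of size `n`. -/
abbrev Mat (n : ℕ) := Matrix (Fin n) (Fin n) ℂ

/-- `T_k = (i/√(k(k+1)))·diag(1,…,1,−k,0,…,0)`, with `k` ones (positions `0,…,k−1` in
0-based indexing, i.e. positions `1,…,k` in the 1-based indexing of the paper) followed by
`−k`. -/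
noncomputable def Tmat (n k : ℕ) : Mat n :=
  (Complex.I / (Real.sqrt (k * (k + 1)) : ℂ)) •
    Matrix.diagonal (fun j : Fin n => if (j : ℕ) < k then 1 else if (j : ℕ) = k then -(k : ℂ) else 0)

/-- `E^r(k,l)`: the matrix with `(p,q)` entry `(1/√2)(δ_{kp}δ_{lq} − δ_{kq}δ_{lp})`. -/
noncomputable def Ermat (n : ℕ) (k l : Fin n) : Mat n :=
  ((Real.sqrt 2 : ℂ))⁻¹ • (Matrix.single k l 1 - Matrix.single l k 1)

/-- `E^c(k,l)`: the matrix with `(p,q)` entry `(i/√2)(δ_{kp}δ_{lq} + δ_{kq}δ_{lp})`. -/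
noncomputable def Ecmat (n : ℕ) (k l : Fin n) : Mat n :=
  (Complex.I / (Real.sqrt 2 : ℂ)) • (Matrix.single k l 1 + Matrix.single l k 1)

/-- The index set for the basis `B` of `su(n)`: `n−1` indices for the `T_k` and two copies
of the set of pairs `k < l` for the `E^r(k,l)` and `E^c(k,l)`. -/
abbrev BIdx (n : ℕ) :=
  Fin (n - 1) ⊕ ({p : Fin n × Fin n // p.1 < p.2} ⊕ {p : Fin n × Fin n // p.1 < p.2})

/-- The family `B = {T_1,…,T_{n−1}} ∪ {E^r(k,l)} ∪ {E^c(k,l)}`. -/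
noncomputable def bmat (n : ℕ) : BIdx n → Mat n
  | Sum.inl k => Tmat n (k + 1)
  | Sum.inr (Sum.inl p) => Ermat n p.1.1 p.1.2
  | Sum.inr (Sum.inr p) => Ecmat n p.1.1 p.1.2

/-- `η = i·diag(1,…,1,−(n−1))`. -/
noncomputable def eta (n : ℕ) : Mat n :=
  Complex.I • Matrix.diagonal (fun j : Fin n => if (j : ℕ) < n - 1 then 1 else -((n : ℂ) - 1))

/-- `H(X,Y) = i·tr(η(XY + YX))`, real-valued on `su(n)`. -/
noncomputable def Hform (n : ℕ) (X Y : Mat n) : ℂ :=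
  Complex.I * (eta n * (X * Y + Y * X)).trace

/-- `σ(X,Y,Z) = i(tr(XYZ) + tr(XZY))`, real-valued on `su(n)`. -/
noncomputable def sigmaC (n : ℕ) (X Y Z : Mat n) : ℂ :=
  Complex.I * ((X * Y * Z).trace + (X * Z * Y).trace)
open Matrix in
lemma std_mul_std {n : ℕ} (a b c d : Fin n) (x y : ℂ) :
    single a b x * single c d y =
      if b = c then single a d (x * y) else 0 := by
  split_ifs with h
  · subst h; exact Matrix.single_mul_single_same (i := a) (j := b) (c := x) d y
  · exact Matrix.single_mul_single_of_ne (c := x) a b c h y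

open Matrix in
lemma trace_eta_mul_std {n : ℕ} (a b : Fin n) (x : ℂ) :
    (eta n * single a b x).trace =
      if b = a then Complex.I * (if (a : ℕ) < n - 1 then 1 else -((n : ℂ) - 1)) * x else 0 := by
  simp only [eta, Matrix.trace, Matrix.diag, Matrix.smul_mul, Matrix.smul_apply,
    Matrix.diagonal_mul, Matrix.single, Matrix.of_apply, smul_eq_mul]
  rw [Finset.sum_eq_single a]
  · by_cases h : b = a <;> simp [h] <;> ring_nf
  · intro p _ hp; simp [hp.symm]
  · simp
noncomputable def etaw (n : ℕ) (a : Fin n) : ℂ := if (a : ℕ) < n - 1 then 1 else -((n : ℂ) - 1)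

open Matrix in
lemma trace_eta_std_std {n : ℕ} (a b c d : Fin n) (x y : ℂ) :
    (eta n * (single a b x * single c d y)).trace =
      if b = c ∧ d = a then Complex.I * etaw n a * (x * y) else 0 := by
  rw [std_mul_std]
  by_cases h1 : b = c <;> by_cases h2 : d = a <;>
    simp [h1, h2, trace_eta_mul_std, etaw]

lemma sqrt2_mul_self : ((Real.sqrt 2 : ℝ) : ℂ) * ((Real.sqrt 2 : ℝ) : ℂ) = 2 := by
  rw [← Complex.ofReal_mul, Real.mul_self_sqrt (by norm_num)]; norm_num

lemma sqrt2_inv_sq : (((Real.sqrt 2 : ℝ) : ℂ))⁻¹ * (((Real.sqrt 2 : ℝ) : ℂ))⁻¹ = 2⁻¹ := by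
  rw [← mul_inv, sqrt2_mul_self]

open Matrix in
lemma H_Er_Er {n : ℕ} (k l k' l' : Fin n) (h : k < l) (h' : k' < l') :
    Hform n (Ermat n k l) (Ermat n k' l') =
      if k = k' ∧ l = l' then etaw n k + etaw n l else 0 := by
  simp only [Hform, Ermat, Matrix.smul_mul, Matrix.mul_smul, smul_smul, sub_mul, mul_sub,
    Matrix.mul_add, Matrix.add_mul, Matrix.trace_add, Matrix.trace_sub, Matrix.trace_smul,
    smul_eq_mul, trace_eta_std_std]
  by_cases hp : k = k' ∧ l = l'
  · obtain ⟨rfl, rfl⟩ := hp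
    simp only [and_self, if_true, h.ne, h.ne', false_and, and_false, if_false, if_true,
      mul_one, mul_zero, sub_zero, zero_sub, and_true, true_and, if_pos rfl]
    linear_combination (-2*Complex.I*Complex.I*(etaw n k + etaw n l)) * sqrt2_inv_sq +
      (-(etaw n k + etaw n l)) * Complex.I_mul_I
  · have c1 : ¬(l = k' ∧ l' = k) := by rintro ⟨rfl, rfl⟩; exact absurd (h.trans h') (lt_irrefl _)
    have c4 : ¬(k = l' ∧ k' = l) := by rintro ⟨rfl, rfl⟩; exact absurd (h'.trans h) (lt_irrefl _)
    have c2 : ¬(k = k' ∧ l' = l) := fun ⟨a, b⟩ => hp ⟨a, b.symm⟩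
    have c3 : ¬(l = l' ∧ k' = k) := fun ⟨a, b⟩ => hp ⟨b.symm, a⟩
    have c5 : ¬(l' = k ∧ l = k') := fun ⟨a, b⟩ => c1 ⟨b, a⟩
    have c6 : ¬(k' = k ∧ l = l') := fun ⟨a, b⟩ => hp ⟨a.symm, b⟩
    have c7 : ¬(l' = l ∧ k = k') := fun ⟨a, b⟩ => hp ⟨b, a.symm⟩
    have c8 : ¬(k' = l ∧ k = l') := fun ⟨a, b⟩ => c4 ⟨b, a⟩
    simp [c1, c2, c3, c4, c5, c6, c7, c8, hp]
def tf (a p : ℕ) : ℂ := if p < a then 1 else if p = a then -(a : ℂ) else 0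

def wf (n p : ℕ) : ℂ := if p < n - 1 then 1 else -((n : ℂ) - 1)

lemma sum_tf_supp (n a : ℕ) (ha : a < n) (g : ℕ → ℂ) :
    ∑ p ∈ Finset.range n, wf n p * (tf a p * g p)
      = ∑ p ∈ Finset.range (a + 1), wf n p * (tf a p * g p) := by
  refine (Finset.sum_subset (Finset.range_subset_range.2 ha) fun p _ hp => ?_).symm
  rw [Finset.mem_range, not_lt] at hp
  have h1 : ¬ p < a := by omega
  have h2 : ¬ p = a := by omega
  simp [tf, h1, h2]

lemma key_sum (n a b : ℕ) (hn : 3 ≤ n) (ha : 1 ≤ a) (ha' : a ≤ n - 1)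
    (hb : 1 ≤ b) (hb' : b ≤ n - 1) :
    ∑ p ∈ Finset.range n, wf n p * (tf a p * tf b p) =
      if a = b then
        (if a < n - 1 then (a : ℂ) * ((a : ℂ) + 1) else -(n : ℂ) * ((n : ℂ) - 1) * ((n : ℂ) - 2))
      else 0 := by
  -- general cross lemma for a < b
  have cross : ∀ a b : ℕ, 1 ≤ a → a < b → b ≤ n - 1 →
      ∑ p ∈ Finset.range n, wf n p * (tf a p * tf b p) = 0 := by
    intro a b ha hab hb'
    rw [sum_tf_supp n a (by omega), Finset.sum_range_succ]
    have : ∀ p ∈ Finset.range a, wf n p * (tf a p * tf b p) = 1 := by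
      intro p hp
      rw [Finset.mem_range] at hp
      have h1 : p < n - 1 := by omega
      have h2 : p < b := by omega
      simp [wf, tf, hp, h1, h2]
    rw [Finset.sum_congr rfl this, Finset.sum_const]
    have h1 : ¬ a < a := lt_irrefl a
    have h2 : a < n - 1 := by omega
    have h3 : a < b := hab
    simp [wf, tf, h1, h2, h3]
  rcases lt_trichotomy a b with hab | rfl | hab
  · rw [if_neg (by omega), cross a b ha hab hb']
  · rw [if_pos rfl]
    by_cases hcase : a < n - 1
    · rw [if_pos hcase, sum_tf_supp n a (by omega), Finset.sum_range_succ]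
      have : ∀ p ∈ Finset.range a, wf n p * (tf a p * tf a p) = 1 := by
        intro p hp
        rw [Finset.mem_range] at hp
        have h1 : p < n - 1 := by omega
        simp [wf, tf, hp, h1]
      rw [Finset.sum_congr rfl this, Finset.sum_const]
      simp [wf, tf, lt_irrefl, hcase]
      ring
    · rw [if_neg hcase]
      have hano : a = n - 1 := by omega
      subst hano
      have hn1 : n = (n - 1) + 1 := by omega
      rw [hn1, Finset.sum_range_succ, ← hn1]
      have : ∀ p ∈ Finset.range (n - 1), wf n p * (tf (n - 1) p * tf (n - 1) p) = 1 := by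
        intro p hp
        rw [Finset.mem_range] at hp
        simp [wf, tf, hp]
      rw [Finset.sum_congr rfl this, Finset.sum_const]
      have h1 : ¬ (n - 1 < n - 1) := lt_irrefl _
      have hc : ((n - 1 : ℕ) : ℂ) = (n : ℂ) - 1 := by
        push_cast [Nat.cast_sub (by omega : 1 ≤ n)]; ring
      simp only [wf, tf, h1, if_neg h1, if_pos rfl, smul_eq_mul, mul_one, hc]
      simp only [Finset.card_range, if_false, if_true]
      rw [nsmul_eq_mul, mul_one, hc]
      ring
  · have := cross b a hb hab ha'
    rw [if_neg (by omega), ← this]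
    exact Finset.sum_congr rfl fun p _ => by ring
lemma Hval_helper (s S : ℂ) (hs : s ≠ 0) :
    Complex.I * ((Complex.I/s * (Complex.I/s) * Complex.I) * S
      + (Complex.I/s * (Complex.I/s) * Complex.I) * S) = 2*S/(s*s) := by
  field_simp
  linear_combination ((-2*S)*Complex.I^2 - 2*S*s^4 + 2*S*Complex.I^2 + 2*S*s^4 + 2*S*(Complex.I^2 - 1)) * Complex.I_sq

lemma tf_def (a p : ℕ) : (if p < a then (1:ℂ) else if p = a then -(a : ℂ) else 0) = tf a p := rfl
lemma wf_def (n p : ℕ) : (if p < n - 1 then (1:ℂ) else -((n : ℂ) - 1)) = wf n p := rfl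

lemma key_sum_fin (n a b : ℕ) (hn : 3 ≤ n) (ha : 1 ≤ a) (ha' : a ≤ n - 1)
    (hb : 1 ≤ b) (hb' : b ≤ n - 1) :
    ∑ i : Fin n, wf n (i : ℕ) * (tf a (i : ℕ) * tf b (i : ℕ)) =
      if a = b then
        (if a < n - 1 then (a : ℂ) * ((a : ℂ) + 1) else -(n : ℂ) * ((n : ℂ) - 1) * ((n : ℂ) - 2))
      else 0 := by
  rw [Fin.sum_univ_eq_sum_range (fun p => wf n p * (tf a p * tf b p))]
  exact key_sum n a b hn ha ha' hb hb'

open Matrix in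
lemma H_T_T {n : ℕ} (hn : 3 ≤ n) (a b : ℕ) (ha : 1 ≤ a) (ha' : a ≤ n - 1)
    (hb : 1 ≤ b) (hb' : b ≤ n - 1) :
    Hform n (Tmat n a) (Tmat n b) =
      if a = b then (if a < n - 1 then 2 else -2 * ((n : ℂ) - 2)) else 0 := by
  simp only [Hform, Tmat, eta, Matrix.smul_mul, Matrix.mul_smul, Matrix.diagonal_mul_diagonal,
    Matrix.mul_add, smul_smul, Matrix.trace_add, Matrix.trace_smul, Matrix.trace_diagonal,
    smul_eq_mul, tf_def, wf_def]
  have hswap : ∑ i : Fin n, wf n (i : ℕ) * (tf b (i : ℕ) * tf a (i : ℕ))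
      = ∑ i : Fin n, wf n (i : ℕ) * (tf a (i : ℕ) * tf b (i : ℕ)) :=
    Finset.sum_congr rfl fun i _ => by ring
  rw [hswap, key_sum_fin n a b hn ha ha' hb hb']
  by_cases hab : a = b
  · subst hab
    rw [if_pos rfl, if_pos rfl]
    set s : ℂ := ((Real.sqrt ((a : ℝ) * ((a : ℝ) + 1)) : ℝ) : ℂ) with hsdef
    have hapos : (0 : ℝ) < (a : ℝ) := by exact_mod_cast ha
    have hs0 : s ≠ 0 := by
      rw [hsdef]
      exact_mod_cast ne_of_gt (Real.sqrt_pos.2 (by positivity))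
    have hsa : s * s = (a : ℂ) * ((a : ℂ) + 1) := by
      rw [hsdef, ← Complex.ofReal_mul, Real.mul_self_sqrt (by positivity)]
      push_cast; ring
    have ha0 : (a : ℂ) ≠ 0 := Nat.cast_ne_zero.2 (by omega)
    have ha1 : (a : ℂ) + 1 ≠ 0 := by
      have : ((a + 1 : ℕ) : ℂ) ≠ 0 := Nat.cast_ne_zero.2 (by omega)
      push_cast at this; exact this
    rw [Hval_helper _ _ hs0, hsa]
    by_cases hc : a < n - 1
    · rw [if_pos hc, if_pos hc]; field_simp
    · rw [if_neg hc, if_neg hc]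
      have hna : (a : ℂ) = (n : ℂ) - 1 := by
        have : a = n - 1 := by omega
        subst this
        push_cast [Nat.cast_sub (by omega : 1 ≤ n)]; ring
      have hn0 : (n : ℂ) ≠ 0 := Nat.cast_ne_zero.2 (by omega)
      have hn1 : (n : ℂ) - 1 ≠ 0 := by rw [← hna]; exact ha0
      rw [hna]
      field_simp
      linear_combination (2 - (n:ℂ)) * mul_inv_cancel₀ hn0
  · rw [if_neg hab, if_neg hab, mul_zero, mul_zero, add_zero, mul_zero]
open Matrix in
lemma Hform_symm {n : ℕ} (X Y : Mat n) : Hform n X Y = Hform n Y X := by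
  simp [Hform, add_comm]

open Matrix in
lemma diag_mul_std {n : ℕ} (d : Fin n → ℂ) (a b : Fin n) (x : ℂ) :
    Matrix.diagonal d * single a b x = single a b (d a * x) := by
  ext i j
  by_cases h : a = i
  · subst h
    simp [Matrix.diagonal_mul, Matrix.single]
  · simp [Matrix.diagonal_mul, Matrix.single, h]

open Matrix in
lemma std_mul_diag {n : ℕ} (d : Fin n → ℂ) (a b : Fin n) (x : ℂ) :
    single a b x * Matrix.diagonal d = single a b (x * d b) := by
  ext i j
  by_cases h : b = j
  · subst h
    simp [Matrix.mul_diagonal, Matrix.single]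
  · simp [Matrix.mul_diagonal, Matrix.single, h]

open Matrix in
lemma H_T_Er {n : ℕ} (m : ℕ) (k l : Fin n) (h : k < l) :
    Hform n (Tmat n m) (Ermat n k l) = 0 := by
  simp [Hform, Tmat, Ermat, Matrix.smul_mul, Matrix.mul_smul, Matrix.mul_add, Matrix.mul_sub,
    Matrix.sub_mul, Matrix.add_mul, smul_smul, smul_sub, diag_mul_std, std_mul_diag,
    trace_eta_mul_std, h.ne, h.ne']

open Matrix in
lemma H_T_Ec {n : ℕ} (m : ℕ) (k l : Fin n) (h : k < l) :
    Hform n (Tmat n m) (Ecmat n k l) = 0 := by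
  simp [Hform, Tmat, Ecmat, Matrix.smul_mul, Matrix.mul_smul, Matrix.mul_add, Matrix.mul_sub,
    Matrix.sub_mul, Matrix.add_mul, smul_smul, smul_add, diag_mul_std, std_mul_diag,
    trace_eta_mul_std, h.ne, h.ne']

open Matrix in
lemma H_Ec_Ec {n : ℕ} (k l k' l' : Fin n) (h : k < l) (h' : k' < l') :
    Hform n (Ecmat n k l) (Ecmat n k' l') =
      if k = k' ∧ l = l' then etaw n k + etaw n l else 0 := by
  simp only [Hform, Ecmat, Matrix.smul_mul, Matrix.mul_smul, smul_smul, add_mul, mul_add,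
    Matrix.mul_add, Matrix.add_mul, Matrix.trace_add, Matrix.trace_smul,
    smul_eq_mul, trace_eta_std_std]
  by_cases hp : k = k' ∧ l = l'
  · obtain ⟨rfl, rfl⟩ := hp
    simp only [and_self, if_true, h.ne, h.ne', false_and, and_false, if_false, if_true,
      mul_one, mul_zero, add_zero, zero_add, and_true, true_and, if_pos rfl]
    have hs : (Complex.I / ((Real.sqrt 2 : ℝ) : ℂ)) * (Complex.I / ((Real.sqrt 2 : ℝ) : ℂ))
        = -2⁻¹ := by
      rw [div_mul_div_comm, Complex.I_mul_I, sqrt2_mul_self]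
      norm_num
    linear_combination (2*Complex.I*Complex.I*(etaw n k + etaw n l)) * hs +
      (-(etaw n k + etaw n l)) * Complex.I_mul_I
  · have c1 : ¬(l = k' ∧ l' = k) := by rintro ⟨rfl, rfl⟩; exact absurd (h.trans h') (lt_irrefl _)
    have c4 : ¬(k = l' ∧ k' = l) := by rintro ⟨rfl, rfl⟩; exact absurd (h'.trans h) (lt_irrefl _)
    have c2 : ¬(k = k' ∧ l' = l) := fun ⟨a, b⟩ => hp ⟨a, b.symm⟩
    have c3 : ¬(l = l' ∧ k' = k) := fun ⟨a, b⟩ => hp ⟨b.symm, a⟩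
    have c5 : ¬(l' = k ∧ l = k') := fun ⟨a, b⟩ => c1 ⟨b, a⟩
    have c6 : ¬(k' = k ∧ l = l') := fun ⟨a, b⟩ => hp ⟨a.symm, b⟩
    have c7 : ¬(l' = l ∧ k = k') := fun ⟨a, b⟩ => hp ⟨b, a.symm⟩
    have c8 : ¬(k' = l ∧ k = l') := fun ⟨a, b⟩ => c4 ⟨b, a⟩
    simp [c1, c2, c3, c4, c5, c6, c7, c8, hp]

open Matrix in
lemma H_Er_Ec {n : ℕ} (k l k' l' : Fin n) (h : k < l) (h' : k' < l') :
    Hform n (Ermat n k l) (Ecmat n k' l') = 0 := by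
  simp only [Hform, Ermat, Ecmat, Matrix.smul_mul, Matrix.mul_smul, smul_smul, add_mul, mul_add,
    sub_mul, mul_sub, Matrix.mul_add, Matrix.add_mul, Matrix.mul_sub, Matrix.sub_mul,
    Matrix.trace_add, Matrix.trace_sub, Matrix.trace_smul, smul_eq_mul, trace_eta_std_std]
  by_cases hp : k = k' ∧ l = l'
  · obtain ⟨rfl, rfl⟩ := hp
    simp only [and_self, if_true, h.ne, h.ne', false_and, and_false, if_false, if_true,
      mul_one, mul_zero, add_zero, zero_add, sub_zero, zero_sub, and_true, true_and, if_pos rfl]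
    ring
  · have c1 : ¬(l = k' ∧ l' = k) := by rintro ⟨rfl, rfl⟩; exact absurd (h.trans h') (lt_irrefl _)
    have c4 : ¬(k = l' ∧ k' = l) := by rintro ⟨rfl, rfl⟩; exact absurd (h'.trans h) (lt_irrefl _)
    have c2 : ¬(k = k' ∧ l' = l) := fun ⟨a, b⟩ => hp ⟨a, b.symm⟩
    have c3 : ¬(l = l' ∧ k' = k) := fun ⟨a, b⟩ => hp ⟨b.symm, a⟩
    have c5 : ¬(l' = k ∧ l = k') := fun ⟨a, b⟩ => c1 ⟨b, a⟩
    have c6 : ¬(k' = k ∧ l = l') := fun ⟨a, b⟩ => hp ⟨a.symm, b⟩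
    have c7 : ¬(l' = l ∧ k = k') := fun ⟨a, b⟩ => hp ⟨b, a.symm⟩
    have c8 : ¬(k' = l ∧ k = l') := fun ⟨a, b⟩ => c4 ⟨b, a⟩
    simp [c1, c2, c3, c4, c5, c6, c7, c8]
noncomputable def hval (n : ℕ) : BIdx n → ℂ
  | Sum.inl k => if (k : ℕ) + 1 < n - 1 then 2 else -2 * ((n : ℂ) - 2)
  | Sum.inr (Sum.inl p) => etaw n p.1.1 + etaw n p.1.2
  | Sum.inr (Sum.inr p) => etaw n p.1.1 + etaw n p.1.2

lemma Hdiag {n : ℕ} (hn : 3 ≤ n) (i j : BIdx n) :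
    Hform n (bmat n i) (bmat n j) = if i = j then hval n i else 0 := by
  rcases i with k | p | p <;> rcases j with k' | q | q
  · rw [bmat, bmat, H_T_T hn _ _ (by omega) (by omega : (k : ℕ) + 1 ≤ n - 1)
      (by omega) (by omega : (k' : ℕ) + 1 ≤ n - 1)]
    by_cases hk : k = k'
    · subst hk; simp [hval]
    · have : ¬((k : ℕ) + 1 = (k' : ℕ) + 1) := fun hh => hk (Fin.ext (by omega))
      simp [this, hk, Fin.val_injective.ne hk]
  · rw [bmat, bmat, H_T_Er _ _ _ q.2]; simp
  · rw [bmat, bmat, H_T_Ec _ _ _ q.2]; simp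
  · rw [bmat, bmat, Hform_symm, H_T_Er _ _ _ p.2]; simp
  · rw [bmat, bmat, H_Er_Er _ _ _ _ p.2 q.2]
    by_cases hpq : p = q
    · subst hpq; simp [hval]
    · have : ¬(p.1.1 = q.1.1 ∧ p.1.2 = q.1.2) := by
        rintro ⟨h1, h2⟩
        exact hpq (Subtype.ext (Prod.ext h1 h2))
      simp [this, hpq]
  · rw [bmat, bmat, H_Er_Ec _ _ _ _ p.2 q.2]; simp
  · rw [bmat, bmat, Hform_symm, H_T_Ec _ _ _ p.2]; simp
  · rw [bmat, bmat, Hform_symm, H_Er_Ec _ _ _ _ q.2 p.2]; simp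
  · rw [bmat, bmat, H_Ec_Ec _ _ _ _ p.2 q.2]
    by_cases hpq : p = q
    · subst hpq; simp [hval]
    · have : ¬(p.1.1 = q.1.1 ∧ p.1.2 = q.1.2) := by
        rintro ⟨h1, h2⟩
        exact hpq (Subtype.ext (Prod.ext h1 h2))
      simp [this, hpq]
lemma gauss_C (m : ℕ) : ∑ j ∈ Finset.range m, (j : ℂ) = (m : ℂ) * ((m : ℂ) - 1) / 2 := by
  induction m with
  | zero => simp
  | succ m ih => rw [Finset.sum_range_succ, ih]; push_cast; ring

lemma sum_indicator_lt (c : ℂ) (b n : ℕ) (hb : b ≤ n) :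
    ∑ j ∈ Finset.range n, (if j < b then c else 0) = (b : ℂ) * c := by
  rw [← Finset.sum_subset (Finset.range_subset_range.2 hb)
    (fun x _ hx => by rw [Finset.mem_range, not_lt] at hx; rw [if_neg (by omega)])]
  rw [Finset.sum_congr rfl (fun x hx => if_pos (Finset.mem_range.1 hx)), Finset.sum_const,
    nsmul_eq_mul, Finset.card_range]

lemma sum_cube_hval (n : ℕ) (hn : 3 ≤ n) :
    ∑ i : BIdx n, (hval n i) ^ 3 =
      2 * ((n : ℂ) - 1) * ((n : ℂ) - 2) * (12 - (n : ℂ) ^ 2) := by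
  have hc1 : ((n - 1 : ℕ) : ℂ) = (n : ℂ) - 1 := by
    push_cast [Nat.cast_sub (by omega : 1 ≤ n)]; ring
  have hc2 : ((n - 2 : ℕ) : ℂ) = (n : ℂ) - 2 := by
    push_cast [Nat.cast_sub (by omega : 2 ≤ n)]; ring
  rw [Fintype.sum_sum_type, Fintype.sum_sum_type]
  -- the T-part
  have hA : ∑ k : Fin (n - 1), (hval n (Sum.inl k)) ^ 3
      = 8 * ((n : ℂ) - 2) + (-2 * ((n : ℂ) - 2)) ^ 3 := by
    have : ∀ k : Fin (n - 1), (hval n (Sum.inl k)) ^ 3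
        = (fun j : ℕ => (if j + 1 < n - 1 then (2 : ℂ) else -2 * ((n : ℂ) - 2)) ^ 3) (k : ℕ) :=
      fun k => rfl
    rw [Finset.sum_congr rfl fun k _ => this k,
      Fin.sum_univ_eq_sum_range (fun j => (if j + 1 < n - 1 then (2:ℂ) else -2 * ((n:ℂ)-2)) ^ 3)]
    rw [show n - 1 = (n - 2) + 1 by omega, Finset.sum_range_succ]
    have hterm : ∀ j ∈ Finset.range (n - 2),
        (if j + 1 < n - 2 + 1 then (2:ℂ) else -2 * ((n:ℂ) - 2)) ^ 3 = 8 := by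
      intro j hj
      rw [Finset.mem_range] at hj
      rw [if_pos (by omega)]
      norm_num
    rw [Finset.sum_congr rfl hterm, if_neg (by omega), Finset.sum_const, nsmul_eq_mul,
      Finset.card_range, hc2]
    ring
  -- the E-part (each of the two copies)
  have hB : ∀ f : {p : Fin n × Fin n // p.1 < p.2} → ℂ,
      (∀ p, f p = etaw n p.1.1 + etaw n p.1.2) →
      ∑ p : {p : Fin n × Fin n // p.1 < p.2}, (f p) ^ 3
        = 4 * ((n : ℂ) - 1) * ((n : ℂ) - 2) + ((n : ℂ) - 1) * (2 - (n : ℂ)) ^ 3 := by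
    intro f hf
    have step1 : ∑ p : {p : Fin n × Fin n // p.1 < p.2}, (f p) ^ 3
        = ∑ p : {p : Fin n × Fin n // p.1 < p.2},
            (if ((p : Fin n × Fin n).2 : ℕ) < n - 1 then (8 : ℂ) else (2 - (n : ℂ)) ^ 3) := by
      refine Finset.sum_congr rfl fun p _ => ?_
      rw [hf]
      have h1 : ((p : Fin n × Fin n).1 : ℕ) < n - 1 := by
        have := p.2
        have h2 := (p : Fin n × Fin n).2.isLt
        omega
      rw [etaw, if_pos h1, etaw]
      by_cases h2 : ((p : Fin n × Fin n).2 : ℕ) < n - 1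
      · rw [if_pos h2, if_pos h2]; norm_num
      · rw [if_neg h2, if_neg h2]; ring
    rw [step1, ← Finset.sum_subtype
      (Finset.univ.filter fun p : Fin n × Fin n => p.1 < p.2)
      (fun p => by simp) (fun p : Fin n × Fin n => if (p.2 : ℕ) < n - 1 then (8:ℂ) else (2 - (n:ℂ)) ^ 3)]
    rw [Finset.sum_filter, Fintype.sum_prod_type, Finset.sum_comm]
    have inner : ∀ b : Fin n, ∑ a : Fin n,
        (if a < b then (if (b : ℕ) < n - 1 then (8:ℂ) else (2 - (n:ℂ)) ^ 3) else 0)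
        = ((b : ℕ) : ℂ) * (if (b : ℕ) < n - 1 then (8:ℂ) else (2 - (n:ℂ)) ^ 3) := by
      intro b
      have ha : ∀ a ∈ (Finset.univ : Finset (Fin n)),
          (if a < b then (if (b : ℕ) < n - 1 then (8:ℂ) else (2 - (n:ℂ)) ^ 3) else 0)
            = (fun j : ℕ => if j < (b : ℕ)
                then (if (b : ℕ) < n - 1 then (8:ℂ) else (2 - (n:ℂ)) ^ 3) else 0) (a : ℕ) :=
        fun a _ => by simp only [Fin.lt_def]
      rw [Finset.sum_congr rfl ha]
      rw [Fin.sum_univ_eq_sum_range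
        (fun j => if j < (b : ℕ) then (if (b : ℕ) < n - 1 then (8:ℂ) else (2 - (n:ℂ)) ^ 3) else 0)]
      exact sum_indicator_lt _ _ n (le_of_lt b.isLt)
    rw [Finset.sum_congr rfl fun b _ => inner b]
    rw [Fin.sum_univ_eq_sum_range
      (fun j => (j : ℂ) * (if j < n - 1 then (8:ℂ) else (2 - (n:ℂ)) ^ 3))]
    rw [show n = (n - 1) + 1 by omega, Finset.sum_range_succ, show (n - 1) + 1 = n by omega]
    have tail : (∑ j ∈ Finset.range (n - 1), (j : ℂ) * (if j < n - 1 then (8:ℂ) else (2 - (n:ℂ)) ^ 3))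
        = 8 * (((n - 1 : ℕ) : ℂ) * (((n - 1 : ℕ) : ℂ) - 1) / 2) :=
      calc (∑ j ∈ Finset.range (n - 1), (j : ℂ) * (if j < n - 1 then (8:ℂ) else (2 - (n:ℂ)) ^ 3))
          = ∑ j ∈ Finset.range (n - 1), 8 * (j : ℂ) :=
            Finset.sum_congr rfl (fun j hj => by
              rw [Finset.mem_range] at hj
              rw [if_pos (by omega), mul_comm])
        _ = 8 * ∑ j ∈ Finset.range (n - 1), (j : ℂ) := (Finset.mul_sum _ _ _).symm
        _ = 8 * (((n - 1 : ℕ) : ℂ) * (((n - 1 : ℕ) : ℂ) - 1) / 2) := by rw [gauss_C]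
    rw [tail, if_neg (by omega), hc1]
    ring
  rw [hA, hB (fun p => hval n (Sum.inr (Sum.inl p))) (fun p => rfl),
    hB (fun p => hval n (Sum.inr (Sum.inr p))) (fun p => rfl)]
  ring
theorem Hform_cubed_contraction (n : ℕ) (hn : 3 ≤ n) :
    ∑ i : BIdx n, ∑ j : BIdx n, ∑ k : BIdx n,
      Hform n (bmat n i) (bmat n j) * Hform n (bmat n j) (bmat n k) *
        Hform n (bmat n k) (bmat n i) =
      2 * ((n : ℂ) - 1) * ((n : ℂ) - 2) * (12 - (n : ℂ) ^ 2) := by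
  have hd := Hdiag (n := n) hn
  have main : ∀ i : BIdx n,
      (∑ j : BIdx n, ∑ k : BIdx n,
        Hform n (bmat n i) (bmat n j) * Hform n (bmat n j) (bmat n k) *
          Hform n (bmat n k) (bmat n i)) = hval n i ^ 3 := by
    intro i
    rw [Finset.sum_eq_single i
      (fun j _ hj => Finset.sum_eq_zero fun k _ => by
        rw [hd i j, if_neg (fun h => hj h.symm), zero_mul, zero_mul])
      (fun h => absurd (Finset.mem_univ i) h)]
    rw [Finset.sum_eq_single i
      (fun k _ hk => by rw [hd k i, if_neg hk, mul_zero])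
      (fun h => absurd (Finset.mem_univ i) h)]
    rw [hd i i, if_pos rfl]
    ring
  rw [Finset.sum_congr rfl fun i _ => main i]
  exact sum_cube_hval n hn
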